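/- arXiv:2510.25096 — 2 statements merged into one kernel-verified Lean document; each statement's English description precedes it below -/
import Mathlib

section
/- Let Ω be a finite probability space, let G : Ω → 𝒢 (the joint of all views), Y : Ω → 𝒴, and let Z = f ∘ G for a function f : 𝒢 → 𝒵, with 𝒢, 𝒴, 𝒵 finite types. If Y and G are conditionally independent given Z, then I(Z;Y) = I(G;Y), i.e. the representation Z is sufficient: its mutual information with the labels equals that of all views combined. -/
open scoped Classical

/-- Probability of an event `E` on a finite probability space with weights `p`. -/
noncomputable def Pr {Ω : Type*} [Fintype Ω] (p : Ω → ℝ) (E : Ω → Prop) : ℝ :=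
  ∑ ω, if E ω then p ω else 0

/-- Mutual information `I(X;Y)` of random variables on a finite probability space.
Summands with zero joint probability are automatically `0` since the factor vanishes. -/
noncomputable def MI {Ω 𝒳 𝒴 : Type*} [Fintype Ω] [Fintype 𝒳] [Fintype 𝒴]
    (p : Ω → ℝ) (X : Ω → 𝒳) (Y : Ω → 𝒴) : ℝ :=
  ∑ x : 𝒳, ∑ y : 𝒴,
    Pr p (fun ω => X ω = x ∧ Y ω = y) *
      Real.log (Pr p (fun ω => X ω = x ∧ Y ω = y) /
        (Pr p (fun ω => X ω = x) * Pr p (fun ω => Y ω = y)))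

/-- Conditional mutual information `I(X;Y|Z)` on a finite probability space. -/
noncomputable def CMI {Ω 𝒳 𝒴 𝒵 : Type*} [Fintype Ω] [Fintype 𝒳] [Fintype 𝒴] [Fintype 𝒵]
    (p : Ω → ℝ) (X : Ω → 𝒳) (Y : Ω → 𝒴) (Z : Ω → 𝒵) : ℝ :=
  ∑ x : 𝒳, ∑ y : 𝒴, ∑ z : 𝒵,
    Pr p (fun ω => X ω = x ∧ Y ω = y ∧ Z ω = z) *
      Real.log ((Pr p (fun ω => Z ω = z) *
          Pr p (fun ω => X ω = x ∧ Y ω = y ∧ Z ω = z)) /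
        (Pr p (fun ω => X ω = x ∧ Z ω = z) * Pr p (fun ω => Y ω = y ∧ Z ω = z)))

/-- `X` and `Y` are conditionally independent given `Z`. -/
def CondIndep {Ω 𝒳 𝒴 𝒵 : Type*} [Fintype Ω]
    (p : Ω → ℝ) (X : Ω → 𝒳) (Y : Ω → 𝒴) (Z : Ω → 𝒵) : Prop :=
  ∀ x y z,
    Pr p (fun ω => Z ω = z) * Pr p (fun ω => X ω = x ∧ Y ω = y ∧ Z ω = z) =
      Pr p (fun ω => X ω = x ∧ Z ω = z) * Pr p (fun ω => Y ω = y ∧ Z ω = z)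

/-!
Because `Z = f ∘ G`, summing `I(Z;Y)` over the fibres of `f` writes it as
`∑ g y, P(G=g, Y=y) · log (P(Z=f g, Y=y) / (P(Z=f g) P(Y=y)))`. Conditional independence says
`P(Y=y | G=g) = P(Y=y | Z=f g)` whenever `P(G=g, Y=y) > 0`, so each summand equals the
corresponding summand of `I(G;Y)`.
-/

section FiniteProbability

variable {Ω : Type*} [Fintype Ω] {p : Ω → ℝ}

lemma Pr_nonneg (hp : ∀ ω, 0 ≤ p ω) (E : Ω → Prop) : 0 ≤ Pr p E :=
  Finset.sum_nonneg fun ω _ => by split_ifs <;> simp [hp ω]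

lemma Pr_mono (hp : ∀ ω, 0 ≤ p ω) {E F : Ω → Prop} (h : ∀ ω, E ω → F ω) :
    Pr p E ≤ Pr p F :=
  Finset.sum_le_sum fun ω _ => by split_ifs <;> simp_all

lemma Pr_congr {E F : Ω → Prop} (h : ∀ ω, E ω ↔ F ω) : Pr p E = Pr p F := by
  simp only [Pr, h]

lemma sum_Pr_eq_and_mul {𝒳 : Type*} [Fintype 𝒳] (X : Ω → 𝒳) (E : Ω → Prop) (φ : 𝒳 → ℝ) :
    ∑ x, Pr p (fun ω => X ω = x ∧ E ω) * φ x = ∑ ω, if E ω then p ω * φ (X ω) else 0 := by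
  simp only [Pr, Finset.sum_mul]
  rw [Finset.sum_comm]
  refine Finset.sum_congr rfl fun ω _ => ?_
  simp [ite_and, eq_comm]

lemma sum_Pr_comp_eq_and_mul {𝒢 𝒵 : Type*} [Fintype 𝒢] [Fintype 𝒵] (G : Ω → 𝒢) (f : 𝒢 → 𝒵)
    (E : Ω → Prop) (φ : 𝒵 → ℝ) :
    ∑ z, Pr p (fun ω => f (G ω) = z ∧ E ω) * φ z =
      ∑ g, Pr p (fun ω => G ω = g ∧ E ω) * φ (f g) := by
  rw [sum_Pr_eq_and_mul]
  exact (sum_Pr_eq_and_mul G E (φ ∘ f)).symm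

end FiniteProbability

section Sufficiency

variable {Ω 𝒢 𝒴 𝒵 : Type*} [Fintype Ω] {p : Ω → ℝ} {G : Ω → 𝒢} {Y : Ω → 𝒴} {f : 𝒢 → 𝒵}

lemma CondIndep.Pr_comp_mul_Pr_eq (hCI : CondIndep p Y G (fun ω => f (G ω))) (g : 𝒢) (y : 𝒴) :
    Pr p (fun ω => f (G ω) = f g) * Pr p (fun ω => G ω = g ∧ Y ω = y) =
      Pr p (fun ω => f (G ω) = f g ∧ Y ω = y) * Pr p (fun ω => G ω = g) := by
  convert hCI y g (f g) using 2 <;> exact Pr_congr fun ω => by grind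

lemma CondIndep.Pr_mul_log_comp_eq (hp : ∀ ω, 0 ≤ p ω)
    (hCI : CondIndep p Y G (fun ω => f (G ω))) (g : 𝒢) (y : 𝒴) :
    Pr p (fun ω => G ω = g ∧ Y ω = y) *
        Real.log (Pr p (fun ω => f (G ω) = f g ∧ Y ω = y) /
          (Pr p (fun ω => f (G ω) = f g) * Pr p (fun ω => Y ω = y))) =
      Pr p (fun ω => G ω = g ∧ Y ω = y) *
        Real.log (Pr p (fun ω => G ω = g ∧ Y ω = y) /
          (Pr p (fun ω => G ω = g) * Pr p (fun ω => Y ω = y))) := by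
  rcases (Pr_nonneg hp _).eq_or_lt with hA | hA
  · rw [← hA, zero_mul, zero_mul]
  have hG : 0 < Pr p (fun ω => G ω = g) := hA.trans_le (Pr_mono hp fun ω h => h.1)
  have hZ : 0 < Pr p (fun ω => f (G ω) = f g) := hG.trans_le (Pr_mono hp fun ω h => by rw [h])
  rw [← div_div, ← div_div]
  congr 3
  rw [div_eq_div_iff hZ.ne' hG.ne']
  linarith [hCI.Pr_comp_mul_Pr_eq g y]

end Sufficiency

theorem representation_sufficiency_general
    {Ω 𝒢 𝒴 𝒵 : Type*} [Fintype Ω] [Fintype 𝒢] [Fintype 𝒴] [Fintype 𝒵]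
    (p : Ω → ℝ) (hp : ∀ ω, 0 ≤ p ω)
    (G : Ω → 𝒢) (Y : Ω → 𝒴) (f : 𝒢 → 𝒵)
    (hCI : CondIndep p Y G (fun ω => f (G ω))) :
    MI p (fun ω => f (G ω)) Y = MI p G Y := by
  calc MI p (fun ω => f (G ω)) Y
      = ∑ y, ∑ z, Pr p (fun ω => f (G ω) = z ∧ Y ω = y) *
          Real.log (Pr p (fun ω => f (G ω) = z ∧ Y ω = y) /
            (Pr p (fun ω => f (G ω) = z) * Pr p (fun ω => Y ω = y))) := Finset.sum_comm
    _ = ∑ y, ∑ g, Pr p (fun ω => G ω = g ∧ Y ω = y) *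
          Real.log (Pr p (fun ω => f (G ω) = f g ∧ Y ω = y) /
            (Pr p (fun ω => f (G ω) = f g) * Pr p (fun ω => Y ω = y))) :=
        Finset.sum_congr rfl fun y _ => sum_Pr_comp_eq_and_mul G f (Y · = y) _
    _ = MI p G Y := by
        rw [Finset.sum_comm]
        exact Finset.sum_congr rfl fun g _ => Finset.sum_congr rfl fun y _ =>
          hCI.Pr_mul_log_comp_eq hp g y

/-- If `Y` and `G` are conditionally independent given `Z = f ∘ G`, then the representation
`Z` is sufficient: `I(Z;Y) = I(G;Y)`. -/
theorem representation_sufficiency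
    {Ω 𝒢 𝒴 𝒵 : Type*} [Fintype Ω] [Fintype 𝒢] [Fintype 𝒴] [Fintype 𝒵]
    (p : Ω → ℝ) (hp : ∀ ω, 0 ≤ p ω) (hp1 : ∑ ω, p ω = 1)
    (G : Ω → 𝒢) (Y : Ω → 𝒴) (f : 𝒢 → 𝒵)
    (hCI : CondIndep p Y G (fun ω => f (G ω))) :
    MI p (fun ω => f (G ω)) Y = MI p G Y :=
  representation_sufficiency_general p hp G Y f hCI
end

section
/- Let n, d ≥ 1, let A be an n×n real matrix with operator norm at most 1 with respect to the Euclidean norm on ℝⁿ, let α ∈ (0,1), and let X' be an n×d real matrix. Define X_diff := α·((I − (1−α)·A)⁻¹ ⬝ X'). Then: (1) X_diff is the unique n×d matrix X satisfying the fixed-point equation X = (1−α)·(A ⬝ X) + α·X'; and (2) for any initial n×d matrix X₀, the APPNP iteration X_{k+1} = (1−α)·(A ⬝ X_k) + α·X' converges to X_diff as k → ∞. -/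
set_option maxHeartbeats 1000000
set_option synthInstance.maxHeartbeats 400000


/-- APPNP diffusion: with `‖A‖_{op} ≤ 1` (Euclidean operator norm) and `α ∈ (0,1)`,
`X_diff = α·(I − (1−α)·A)⁻¹ ⬝ X'` is (1) the unique fixed point of
`X = (1−α)·(A ⬝ X) + α·X'`, and (2) the limit of the APPNP iteration
`X_{k+1} = (1−α)·(A ⬝ X_k) + α·X'` from any initial matrix `X₀`. -/
theorem appnp_fixed_point_and_convergence (n d : ℕ) (hn : 1 ≤ n) (hd : 1 ≤ d)
    (A : Matrix (Fin n) (Fin n) ℝ)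
    (hA : ‖Matrix.toEuclideanCLM (𝕜 := ℝ) A‖ ≤ 1)
    (α : ℝ) (hα : α ∈ Set.Ioo (0 : ℝ) 1)
    (X' : Matrix (Fin n) (Fin d) ℝ) :
    (∀ X : Matrix (Fin n) (Fin d) ℝ,
        X = (1 - α) • (A * X) + α • X' ↔
          X = α • ((1 - (1 - α) • A)⁻¹ * X')) ∧
      (∀ X₀ : Matrix (Fin n) (Fin d) ℝ,
        Filter.Tendsto
          (fun k : ℕ =>
            Nat.rec (motive := fun _ => Matrix (Fin n) (Fin d) ℝ) X₀
              (fun _ Xk => (1 - α) • (A * Xk) + α • X') k)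
          Filter.atTop
          (nhds (α • ((1 - (1 - α) • A)⁻¹ * X')))) := by
  obtain ⟨hα0, hα1⟩ := hα
  obtain ⟨B, hBdef⟩ : ∃ B : Matrix (Fin n) (Fin n) ℝ, B = (1 - α) • A := ⟨_, rfl⟩
  rw [← hBdef]
  have hBX : ∀ Y : Matrix (Fin n) (Fin d) ℝ, (1 - α) • (A * Y) = B * Y := by
    intro Y; rw [hBdef, Matrix.smul_mul]
  have heB : Matrix.toEuclideanCLM (𝕜 := ℝ) B
      = (1 - α) • Matrix.toEuclideanCLM (𝕜 := ℝ) A := by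
    rw [hBdef, map_smul]
  have hfB : ‖Matrix.toEuclideanCLM (𝕜 := ℝ) B‖ < 1 := by
    rw [heB]
    calc ‖(1 - α) • Matrix.toEuclideanCLM (𝕜 := ℝ) A‖
        ≤ ‖(1 - α : ℝ)‖ * ‖Matrix.toEuclideanCLM (𝕜 := ℝ) A‖ := ContinuousLinearMap.opNorm_smul_le _ _
      _ ≤ ‖(1 - α : ℝ)‖ * 1 := mul_le_mul_of_nonneg_left hA (norm_nonneg _)
      _ = |1 - α| := by simp
      _ < 1 := by rw [abs_of_pos (by linarith)]; linarith
  -- invertibility of 1 - B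
  have hUf : IsUnit (1 - Matrix.toEuclideanCLM (𝕜 := ℝ) B) := (Units.oneSub _ hfB).isUnit
  have hU : IsUnit (1 - B) := by
    have h1 : Matrix.toEuclideanCLM (𝕜 := ℝ) (1 - B)
        = 1 - Matrix.toEuclideanCLM (𝕜 := ℝ) B := by simp
    rw [← h1] at hUf
    exact (isUnit_map_iff
      (Matrix.toEuclideanCLM (𝕜 := ℝ) (n := Fin n)).toRingEquiv _).mp hUf
  have hdet : IsUnit (1 - B).det := (Matrix.isUnit_iff_isUnit_det _).mp hU
  have hinv_mul : (1 - B)⁻¹ * (1 - B) = 1 := Matrix.nonsing_inv_mul _ hdet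
  have hmul_inv : (1 - B) * (1 - B)⁻¹ = 1 := Matrix.mul_nonsing_inv _ hdet
  -- fixed point characterization
  have hfix : ∀ X : Matrix (Fin n) (Fin d) ℝ,
      X = (1 - α) • (A * X) + α • X' ↔ X = α • ((1 - B)⁻¹ * X') := by
    intro X
    rw [hBX]
    constructor
    · intro h
      have h2 : (1 - B) * X = α • X' := by
        rw [Matrix.sub_mul, Matrix.one_mul, sub_eq_iff_eq_add]
        conv_lhs => rw [h]
        exact add_comm _ _
      have := congrArg (fun M => (1 - B)⁻¹ * M) h2
      rw [← Matrix.mul_assoc, hinv_mul, Matrix.one_mul, Matrix.mul_smul] at this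
      exact this
    · intro h
      have h2 : (1 - B) * X = α • X' := by
        rw [h, Matrix.mul_smul, ← Matrix.mul_assoc, hmul_inv, Matrix.one_mul]
      rw [Matrix.sub_mul, Matrix.one_mul, sub_eq_iff_eq_add] at h2
      rw [add_comm] at h2
      exact h2
  refine ⟨hfix, ?_⟩
  intro X₀
  obtain ⟨Xf, hXf⟩ : ∃ Xf : Matrix (Fin n) (Fin d) ℝ, Xf = α • ((1 - B)⁻¹ * X') := ⟨_, rfl⟩
  rw [← hXf]
  have hXfB : Xf = B * Xf + α • X' := by
    have := (hfix Xf).mpr hXf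
    rwa [hBX] at this
  have hclosed : ∀ k : ℕ,
      (Nat.rec (motive := fun _ => Matrix (Fin n) (Fin d) ℝ) X₀
        (fun _ Xk => (1 - α) • (A * Xk) + α • X') k) = Xf + B ^ k * (X₀ - Xf) := by
    intro k
    induction k with
    | zero => simp
    | succ k ih =>
      show (1 - α) • (A * _) + α • X' = _
      rw [ih, hBX, Matrix.mul_add, ← Matrix.mul_assoc, ← pow_succ']
      nth_rewrite 3 [hXfB]
      abel
  -- B ^ k → 0
  have hpowf : Filter.Tendsto (fun k => (Matrix.toEuclideanCLM (𝕜 := ℝ) B) ^ k)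
      Filter.atTop (nhds 0) := tendsto_pow_atTop_nhds_zero_of_norm_lt_one hfB
  have hcont : Continuous ((Matrix.toEuclideanCLM (𝕜 := ℝ) (n := Fin n)).symm :
      (EuclideanSpace ℝ (Fin n) →L[ℝ] EuclideanSpace ℝ (Fin n)) → Matrix (Fin n) (Fin n) ℝ) := by
    let L : (EuclideanSpace ℝ (Fin n) →L[ℝ] EuclideanSpace ℝ (Fin n)) →ₗ[ℝ]
        Matrix (Fin n) (Fin n) ℝ :=
      { toFun := (Matrix.toEuclideanCLM (𝕜 := ℝ) (n := Fin n)).symm,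
        map_add' := map_add _, map_smul' := map_smul _ }
    exact L.continuous_of_finiteDimensional
  have hpowB : Filter.Tendsto (fun k => B ^ k) Filter.atTop (nhds 0) := by
    have h1 : ∀ k : ℕ, B ^ k = (Matrix.toEuclideanCLM (𝕜 := ℝ) (n := Fin n)).symm
        ((Matrix.toEuclideanCLM (𝕜 := ℝ) B) ^ k) := by
      intro k
      rw [← map_pow]
      exact (StarAlgEquiv.symm_apply_apply _ _).symm
    have h2 := (hcont.tendsto 0).comp hpowf
    have h3 : (Matrix.toEuclideanCLM (𝕜 := ℝ) (n := Fin n)).symm 0 = 0 := map_zero _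
    rw [h3] at h2
    exact h2.congr fun k => (h1 k).symm
  have hc : Continuous (fun M : Matrix (Fin n) (Fin n) ℝ => Xf + M * (X₀ - Xf)) :=
    continuous_const.add (continuous_id.matrix_mul continuous_const)
  have hmain := (hc.tendsto 0).comp hpowB
  have h0 : Xf + (0 : Matrix (Fin n) (Fin n) ℝ) * (X₀ - Xf) = Xf := by
    rw [Matrix.zero_mul, add_zero]
  rw [h0] at hmain
  exact hmain.congr fun k => (hclosed k).symm
end
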